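/- Let a>0, 0<s<1/2, let g : ℝ → ℂ be measurable, vanishing outside [-a,a], with ∫_{-a}^{a}|g(ξ)|²|ξ|^{2s}dξ < ∞, and define f(z) = (2π)^{-1/2} ∫_{-a}^{a} g(ξ)e^{izξ}dξ. For n ∈ ℤ set c_n = (2a)^{-1/2} ∫_{-a}^{a} |ξ|^{s} g(ξ) e^{-inπξ/a} dξ and ψ_n(z) = (2√(aπ))^{-1} ∫_{-a}^{a} e^{inπξ/a} e^{izξ} |ξ|^{-s} dξ. Then the series Σ_{n∈ℤ} c_n ψ_n(z) converges to f(z), uniformly on every compact subset of ℂ. -/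

import Mathlib

/-!
Write `g(ξ) e^{izξ} = (|ξ|^s g(ξ)) · (e^{izξ} |ξ|^{-s})`. The first factor `h` is in `L²(-a, a)`
by hypothesis and the second, the kernel `k_z`, because `|ξ|^{-2s}` is integrable for `s < 1/2`.
Viewing both as `2a`-periodic functions, `f(z)` is a constant multiple of the `L²` pairing of
`h` with `k_z`, and up to constants `c_n` is the `n`-th Fourier coefficient of `h` and `ψ_n(z)`
the pairing of `k_z` with `e^{inπξ/a}`. The symmetric partial sums of the Fourier series of
`h` converge in `L²`, so by Cauchy–Schwarz the pairings converge uniformly in `z` wherever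
`‖k_z‖₂` stays bounded; it does on compact sets since `|e^{izξ}| ≤ e^{|z| a}` for `|ξ| ≤ a`.
-/

open MeasureTheory Complex Filter Topology

noncomputable section

open scoped Real

theorem tendstoUniformlyOn_inner_of_tendsto {𝕜 E α ι : Type*} [RCLike 𝕜]
    [NormedAddCommGroup E] [InnerProductSpace 𝕜 E] {u : α → E} {K : Set α} {B : ℝ}
    (hB : ∀ z ∈ K, ‖u z‖ ≤ B) {l : Filter ι} {S : ι → E} {x : E} (hS : Tendsto S l (𝓝 x)) :
    TendstoUniformlyOn (fun i z => inner 𝕜 (u z) (S i)) (fun z => inner 𝕜 (u z) x) l K := by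
  rw [Metric.tendstoUniformlyOn_iff]
  intro ε hε
  have hnorm := (tendsto_iff_norm_sub_tendsto_zero.mp hS).const_mul B
  rw [mul_zero] at hnorm
  filter_upwards [hnorm.eventually (gt_mem_nhds hε)] with i hi z hz
  calc dist (inner 𝕜 (u z) x) (inner 𝕜 (u z) (S i)) = ‖inner 𝕜 (u z) (S i - x)‖ := by
        rw [dist_eq_norm', inner_sub_right]
    _ ≤ ‖u z‖ * ‖S i - x‖ := norm_inner_le_norm _ _
    _ ≤ B * ‖S i - x‖ := by gcongr; exact hB z hz
    _ < ε := hi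

theorem intervalIntegrable_abs_rpow {r : ℝ} (hr : -1 < r) (b c : ℝ) :
    IntervalIntegrable (fun x : ℝ => |x| ^ r) volume b c := by
  have hpos : ∀ c, 0 ≤ c → IntervalIntegrable (fun x : ℝ => |x| ^ r) volume 0 c := fun c hc =>
    (intervalIntegral.intervalIntegrable_rpow' hr).congr fun x hx => by
      rw [Set.uIoc_of_le hc] at hx
      simp only [abs_of_pos hx.1]
  have hall : ∀ c, IntervalIntegrable (fun x : ℝ => |x| ^ r) volume 0 c := by
    intro c
    rcases le_total 0 c with hc | hc
    · exact hpos c hc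
    · simpa using (IntervalIntegrable.iff_comp_neg (a := 0) (b := -c)).mp (hpos (-c) (by linarith))
  exact (hall b).symm.trans (hall c)

theorem inner_toLp_star_eq_integral {α : Type*} [MeasurableSpace α] {μ : Measure α}
    {F G : α → ℂ} (hF : MemLp F 2 μ) {v : Lp ℂ 2 μ} (hv : v =ᵐ[μ] G) :
    inner ℂ hF.star.toLp v = ∫ x, F x * G x ∂μ := by
  rw [L2.inner_def]
  refine integral_congr_ae ?_
  filter_upwards [hF.star.coeFn_toLp, hv] with x hxF hxv
  simp [hxF, hxv, mul_comm]

namespace AddCircle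

variable {T : ℝ} [Fact (0 < T)]

theorem liftIoc_mul_liftIoc_apply (t : ℝ) (u v : ℝ → ℂ) (x : AddCircle T) :
    liftIoc T t u x * liftIoc T t v x = liftIoc T t (fun ξ => u ξ * v ξ) x :=
  rfl

theorem integral_liftIoc_haarAddCircle (t : ℝ) (u : ℝ → ℂ) :
    ∫ x, liftIoc T t u x ∂haarAddCircle = (T : ℂ)⁻¹ * ∫ ξ in t..t + T, u ξ := by
  rw [integral_haarAddCircle, integral_liftIoc_eq_intervalIntegral, Complex.real_smul,
    Complex.ofReal_inv]

theorem tendsto_sum_Icc_fourierCoeff_smul_fourierLp {F : AddCircle T → ℂ}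
    (hF : MemLp F 2 haarAddCircle) :
    Tendsto (fun N : ℕ => ∑ n ∈ Finset.Icc (-(N : ℤ)) N, fourierCoeff F n • fourierLp 2 n)
      atTop (𝓝 hF.toLp) := by
  simpa [Function.comp_def, fourierCoeff_congr_ae hF.coeFn_toLp] using
    (hasSum_fourier_series_L2 hF.toLp).comp Finset.tendsto_Icc_neg

end AddCircle

namespace PaleyWiener

open AddCircle

def weighted (s : ℝ) (g : ℝ → ℂ) (ξ : ℝ) : ℂ := ((|ξ| ^ s : ℝ) : ℂ) * g ξ

def kernel (s : ℝ) (z : ℂ) (ξ : ℝ) : ℂ := cexp (I * z * ξ) * ((|ξ| ^ (-s) : ℝ) : ℂ)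

theorem norm_kernel_le (s : ℝ) (z : ℂ) {a ξ : ℝ} (hξ : |ξ| ≤ a) :
    ‖kernel s z ξ‖ ≤ Real.exp (‖z‖ * a) * ‖((|ξ| ^ (-s) : ℝ) : ℂ)‖ := by
  rw [kernel, norm_mul, Complex.norm_exp]
  gcongr
  have hre : (I * z * ξ).re = -(z.im * ξ) := by simp
  calc (I * z * ξ).re ≤ |z.im| * |ξ| := by rw [hre, ← abs_mul]; exact neg_le_abs _
    _ ≤ ‖z‖ * a := by gcongr; exact abs_im_le_norm z

theorem memLp_weighted {s : ℝ} {g : ℝ → ℂ} (hg : Measurable g)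
    (hgL2 : Integrable (fun ξ : ℝ => ‖g ξ‖ ^ 2 * |ξ| ^ (2 * s))) :
    MemLp (weighted s g) 2 volume := by
  refine (memLp_two_iff_integrable_sq_norm (by unfold weighted; fun_prop)).2 (hgL2.congr ?_)
  refine ae_of_all _ fun ξ => ?_
  simp only [weighted]
  rw [norm_mul, Complex.norm_real, Real.norm_of_nonneg (by positivity), mul_pow,
    ← Real.rpow_natCast (|ξ| ^ s), ← Real.rpow_mul (abs_nonneg ξ)]
  push_cast
  ring_nf

theorem memLp_abs_rpow_neg {s : ℝ} (hs : s < 1 / 2) (b c : ℝ) :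
    MemLp (fun ξ : ℝ => ((|ξ| ^ (-s) : ℝ) : ℂ)) 2 (volume.restrict (Set.Ioc b c)) := by
  have hm : Measurable (fun ξ : ℝ => ((|ξ| ^ (-s) : ℝ) : ℂ)) := by fun_prop
  refine (memLp_two_iff_integrable_sq_norm hm.aestronglyMeasurable).2 ?_
  refine ((intervalIntegrable_abs_rpow (r := -(2 * s)) (by linarith) b c).def'.mono_set
    Set.Ioc_subset_uIoc).congr_fun (fun ξ _ => ?_) measurableSet_Ioc
  rw [Complex.norm_real, Real.norm_of_nonneg (by positivity), ← Real.rpow_natCast,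
    ← Real.rpow_mul (abs_nonneg ξ)]
  push_cast
  ring_nf

theorem inv_sqrt_two_mul_mul_inv_two_sqrt_mul {a : ℝ} (ha : 0 < a) :
    (√(2 * a))⁻¹ * (2 * √(a * π))⁻¹ * (2 * a) = (2 * π) ^ (-(1 / 2) : ℝ) := by
  have h : √(2 * a) * √(a * π) = a * √(2 * π) := by
    rw [← Real.sqrt_mul (by positivity), show 2 * a * (a * π) = a ^ 2 * (2 * π) by ring,
      Real.sqrt_mul (by positivity), Real.sqrt_sq ha.le]
  rw [Real.rpow_neg (by positivity), ← Real.sqrt_eq_rpow]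
  field_simp
  linear_combination -h

variable {a : ℝ} [Fact (0 < 2 * a)]

theorem integral_haar_liftIoc_eq_integral_Icc (u : ℝ → ℂ) :
    ∫ x, liftIoc (2 * a) (-a) u x ∂haarAddCircle =
      (2 * (a : ℂ))⁻¹ * ∫ ξ in Set.Icc (-a) a, u ξ := by
  have ha : -a ≤ a := by linarith [(Fact.out : 0 < 2 * a)]
  rw [integral_liftIoc_haarAddCircle, show -a + 2 * a = a by ring,
    intervalIntegral.integral_of_le ha, integral_Icc_eq_integral_Ioc, Complex.ofReal_mul,
    Complex.ofReal_ofNat]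

theorem fourier_coe_eq_cexp (n : ℤ) (ξ : ℝ) :
    fourier n (ξ : AddCircle (2 * a)) = cexp (I * n * π * ξ / a) := by
  have ha : (a : ℂ) ≠ 0 := by
    exact_mod_cast (by linarith [(Fact.out : 0 < 2 * a)] : a ≠ 0)
  rw [fourier_coe_apply]
  congr 1
  push_cast
  field_simp

theorem fourier_mul_liftIoc (n : ℤ) (u : ℝ → ℂ) (x : AddCircle (2 * a)) :
    fourier n x * liftIoc (2 * a) (-a) u x =
      liftIoc (2 * a) (-a) (fun ξ => cexp (I * n * π * ξ / a) * u ξ) x := by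
  change _ = cexp (I * n * π * (equivIoc (2 * a) (-a) x : ℝ) / a) * u (equivIoc (2 * a) (-a) x)
  rw [← fourier_coe_eq_cexp, coe_equivIoc]
  rfl

theorem fourierCoeff_liftIoc_eq_integral_Icc (u : ℝ → ℂ) (n : ℤ) :
    fourierCoeff (liftIoc (2 * a) (-a) u) n =
      (2 * (a : ℂ))⁻¹ * ∫ ξ in Set.Icc (-a) a, u ξ * cexp (-I * n * π * ξ / a) := by
  simp_rw [fourierCoeff, smul_eq_mul, fourier_mul_liftIoc]
  rw [integral_haar_liftIoc_eq_integral_Icc]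
  congr 1
  refine setIntegral_congr_fun measurableSet_Icc fun ξ _ => ?_
  push_cast
  ring_nf

theorem integral_Icc_cexp_mul_eq_integral_liftIoc_mul_fourier (u : ℝ → ℂ) (n : ℤ) :
    ∫ ξ in Set.Icc (-a) a, cexp (I * n * π * ξ / a) * u ξ =
      2 * a * ∫ x, liftIoc (2 * a) (-a) u x * fourier n x ∂haarAddCircle := by
  have ha : (2 * a : ℂ) ≠ 0 := by exact_mod_cast (Fact.out : 0 < 2 * a).ne'
  simp_rw [mul_comm _ (fourier n _), fourier_mul_liftIoc]
  rw [integral_haar_liftIoc_eq_integral_Icc, ← mul_assoc, mul_inv_cancel₀ ha, one_mul]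

theorem integral_Icc_weighted_mul_cexp_eq (s : ℝ) (g : ℝ → ℂ) (n : ℤ) :
    ∫ ξ in Set.Icc (-a) a, ((|ξ| ^ s : ℝ) : ℂ) * g ξ * cexp (-I * n * π * ξ / a) =
      2 * a * fourierCoeff (liftIoc (2 * a) (-a) (weighted s g)) n := by
  have ha : (2 * a : ℂ) ≠ 0 := by exact_mod_cast (Fact.out : 0 < 2 * a).ne'
  rw [fourierCoeff_liftIoc_eq_integral_Icc, mul_inv_cancel_left₀ ha]
  rfl

theorem integral_Icc_cexp_mul_cexp_mul_abs_rpow_neg_eq (s : ℝ) (z : ℂ) (n : ℤ) :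
    ∫ ξ in Set.Icc (-a) a, cexp (I * n * π * ξ / a) * cexp (I * z * ξ) * ((|ξ| ^ (-s) : ℝ) : ℂ) =
      2 * a * ∫ x, liftIoc (2 * a) (-a) (kernel s z) x * fourier n x ∂haarAddCircle := by
  rw [← integral_Icc_cexp_mul_eq_integral_liftIoc_mul_fourier]
  simp only [kernel, mul_assoc]

theorem memLp_liftIoc_haar {u : ℝ → ℂ} (hu : MemLp u 2 (volume.restrict (Set.Ioc (-a) a))) :
    MemLp (liftIoc (2 * a) (-a) u) 2 haarAddCircle := by
  rw [show Set.Ioc (-a) a = Set.Ioc (-a) (-a + 2 * a) by ring_nf] at hu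
  exact hu.memLp_liftIoc.haarAddCircle

theorem integral_mul_cexp_eq_integral_kernel_mul_weighted {s : ℝ} {g : ℝ → ℂ}
    (hg : ∀ ξ, ξ ∉ Set.Icc (-a) a → g ξ = 0) (z : ℂ) :
    ∫ ξ, g ξ * cexp (I * z * ξ) = 2 * a * ∫ x, liftIoc (2 * a) (-a) (kernel s z) x *
      liftIoc (2 * a) (-a) (weighted s g) x ∂haarAddCircle := by
  have ha : (2 * a : ℂ) ≠ 0 := by exact_mod_cast (Fact.out : 0 < 2 * a).ne'
  simp_rw [liftIoc_mul_liftIoc_apply]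
  rw [integral_haar_liftIoc_eq_integral_Icc, ← mul_assoc, mul_inv_cancel₀ ha, one_mul,
    ← setIntegral_eq_integral_of_forall_compl_eq_zero fun ξ hξ => by rw [hg ξ hξ, zero_mul]]
  refine setIntegral_congr_ae measurableSet_Icc ?_
  filter_upwards [Measure.ae_ne volume 0] with ξ hξ _
  have hcancel : ((|ξ| ^ (-s) : ℝ) : ℂ) * ((|ξ| ^ s : ℝ) : ℂ) = 1 := by
    rw [Real.rpow_neg (abs_nonneg ξ), ← Complex.ofReal_mul, inv_mul_cancel₀ (by positivity),
      Complex.ofReal_one]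
  simp only [kernel, weighted]
  linear_combination -(g ξ * cexp (I * z * ξ)) * hcancel

theorem exists_Lp_kernel {s : ℝ} (hs : s < 1 / 2) :
    ∃ u : ℂ → Lp ℂ 2 (haarAddCircle (T := 2 * a)),
      (∀ z (v : Lp ℂ 2 (haarAddCircle (T := 2 * a))) (G : AddCircle (2 * a) → ℂ),
        v =ᵐ[haarAddCircle] G →
          inner ℂ (u z) v = ∫ x, liftIoc (2 * a) (-a) (kernel s z) x * G x ∂haarAddCircle) ∧
      ∀ K : Set ℂ, IsCompact K → ∃ B, ∀ z ∈ K, ‖u z‖ ≤ B := by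
  have hW := memLp_abs_rpow_neg hs (-a) a
  have hk : ∀ z, MemLp (kernel s z) 2 (volume.restrict (Set.Ioc (-a) a)) := fun z =>
    hW.of_le_mul (by unfold kernel; fun_prop) <| (ae_restrict_mem measurableSet_Ioc).mono
      fun ξ hξ => norm_kernel_le s z (abs_le.2 ⟨hξ.1.le, hξ.2⟩)
  -- Conjugating the kernel turns the sesquilinear inner product into the bilinear pairing.
  refine ⟨fun z => (memLp_liftIoc_haar (hk z)).star.toLp,
    fun z v G hv => inner_toLp_star_eq_integral (memLp_liftIoc_haar (hk z)) hv, fun K hK => ?_⟩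
  have hnorm : ∀ z, ‖(memLp_liftIoc_haar (hk z)).star.toLp‖ ≤
      Real.exp (‖z‖ * a) * ‖(memLp_liftIoc_haar hW).toLp‖ := by
    intro z
    refine Lp.norm_le_mul_norm_of_ae_le_mul ?_
    filter_upwards [(memLp_liftIoc_haar (hk z)).star.coeFn_toLp,
      (memLp_liftIoc_haar hW).coeFn_toLp] with x hkx hWx
    rw [hkx, hWx, Pi.star_apply, norm_star]
    have hx := (equivIoc (2 * a) (-a) x).2
    exact norm_kernel_le s z (abs_le.2 ⟨hx.1.le, by linarith [hx.2]⟩)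
  obtain ⟨B, hB⟩ := hK.exists_bound_of_continuousOn
    (f := fun z => Real.exp (‖z‖ * a) * ‖(memLp_liftIoc_haar hW).toLp‖) (by fun_prop)
  exact ⟨B, fun z hz => (hnorm z).trans ((le_abs_self _).trans (by simpa using hB z hz))⟩

end PaleyWiener

open PaleyWiener AddCircle

theorem stmt11_general (a s : ℝ) (ha : 0 < a) (hs : s < 1 / 2)
    (g : ℝ → ℂ) (f : ℂ → ℂ) (c : ℤ → ℂ) (ψ : ℤ → ℂ → ℂ)
    (hgm : Measurable g)
    (hgsupp : ∀ ξ : ℝ, ξ ∉ Set.Icc (-a) a → g ξ = 0)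
    (hgL2 : Integrable (fun ξ : ℝ => ‖g ξ‖ ^ 2 * |ξ| ^ (2 * s)))
    (hf : ∀ z : ℂ, f z =
      (((2 * Real.pi) ^ (-(1 / 2) : ℝ) : ℝ) : ℂ) *
        ∫ ξ : ℝ, g ξ * Complex.exp (Complex.I * z * ξ))
    (hc : ∀ n : ℤ, c n = (((Real.sqrt (2 * a))⁻¹ : ℝ) : ℂ) *
      ∫ ξ in Set.Icc (-a) a, ((|ξ| ^ s : ℝ) : ℂ) * g ξ *
        Complex.exp (-Complex.I * n * Real.pi * ξ / a))
    (hψ : ∀ (n : ℤ) (z : ℂ), ψ n z = (((2 * Real.sqrt (a * Real.pi))⁻¹ : ℝ) : ℂ) *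
      ∫ ξ in Set.Icc (-a) a, Complex.exp (Complex.I * n * Real.pi * ξ / a) *
        Complex.exp (Complex.I * z * ξ) * ((|ξ| ^ (-s) : ℝ) : ℂ)) :
    ∀ K : Set ℂ, IsCompact K →
      TendstoUniformlyOn
        (fun (N : ℕ) (z : ℂ) => ∑ n ∈ Finset.Icc (-(N : ℤ)) (N : ℤ), c n * ψ n z)
        f Filter.atTop K := by
  intro K hK
  have : Fact (0 < 2 * a) := ⟨by linarith⟩
  set H := liftIoc (2 * a) (-a) (weighted s g)
  have hH : MemLp H 2 haarAddCircle := memLp_liftIoc_haar ((memLp_weighted hgm hgL2).restrict _)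
  obtain ⟨u, hu, hu_bdd⟩ := exists_Lp_kernel (a := a) hs
  obtain ⟨B, hB⟩ := hu_bdd K hK
  set C : ℂ := ((2 * π) ^ (-(1 / 2) : ℝ) : ℝ) * (2 * a) with hC
  have hf_eq : ∀ z, inner ℂ (u z) (C • hH.toLp) = f z := by
    intro z
    rw [inner_smul_right, hu z _ _ hH.coeFn_toLp, hf z,
      integral_mul_cexp_eq_integral_kernel_mul_weighted hgsupp]
    ring
  have hterm_eq : ∀ n z, inner ℂ (u z) (C • fourierCoeff H n • fourierLp 2 n) = c n * ψ n z := by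
    intro n z
    rw [hc n, hψ n z, integral_Icc_weighted_mul_cexp_eq,
      integral_Icc_cexp_mul_cexp_mul_abs_rpow_neg_eq, inner_smul_right, inner_smul_right,
      hu z _ _ (coeFn_fourierLp 2 n), hC, ← inv_sqrt_two_mul_mul_inv_two_sqrt_mul ha]
    push_cast
    ring
  refine ((tendstoUniformlyOn_inner_of_tendsto hB
    ((tendsto_sum_Icc_fourierCoeff_smul_fourierLp hH).const_smul C)).congr
    (Eventually.of_forall fun N z _ => ?_)).congr_right fun z _ => hf_eq z
  simp only [Finset.smul_sum, inner_sum, hterm_eq]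

theorem stmt11 (a s : ℝ) (ha : 0 < a) (hs0 : 0 < s) (hs : s < 1 / 2)
    (g : ℝ → ℂ) (f : ℂ → ℂ) (c : ℤ → ℂ) (ψ : ℤ → ℂ → ℂ)
    (hgm : Measurable g)
    (hgsupp : ∀ ξ : ℝ, ξ ∉ Set.Icc (-a) a → g ξ = 0)
    (hgL2 : Integrable (fun ξ : ℝ => ‖g ξ‖ ^ 2 * |ξ| ^ (2 * s)))
    (hf : ∀ z : ℂ, f z =
      (((2 * Real.pi) ^ (-(1 / 2) : ℝ) : ℝ) : ℂ) *
        ∫ ξ : ℝ, g ξ * Complex.exp (Complex.I * z * ξ))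
    (hc : ∀ n : ℤ, c n = (((Real.sqrt (2 * a))⁻¹ : ℝ) : ℂ) *
      ∫ ξ in Set.Icc (-a) a, ((|ξ| ^ s : ℝ) : ℂ) * g ξ *
        Complex.exp (-Complex.I * n * Real.pi * ξ / a))
    (hψ : ∀ (n : ℤ) (z : ℂ), ψ n z = (((2 * Real.sqrt (a * Real.pi))⁻¹ : ℝ) : ℂ) *
      ∫ ξ in Set.Icc (-a) a, Complex.exp (Complex.I * n * Real.pi * ξ / a) *
        Complex.exp (Complex.I * z * ξ) * ((|ξ| ^ (-s) : ℝ) : ℂ)) :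
    ∀ K : Set ℂ, IsCompact K →
      TendstoUniformlyOn
        (fun (N : ℕ) (z : ℂ) => ∑ n ∈ Finset.Icc (-(N : ℤ)) (N : ℤ), c n * ψ n z)
        f Filter.atTop K :=
  stmt11_general a s ha hs g f c ψ hgm hgsupp hgL2 hf hc hψ
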